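/- Let A be a normal ordered subgroupoid of an ordered groupoid G, let g ∈ G, and let e be an identity of G with [e] ≤ [gg⁻¹] in G ⫽ A. Then there exists an arrow class [k] ∈ G ⫽ A with [k] ≤ [g] and [kk⁻¹] = [e], and this class is unique: concretely, if a ∈ A satisfies aa⁻¹ ≤ gg⁻¹ and a⁻¹a = e, then g' = (aa⁻¹ | g) satisfies [g'] ≤ [g] and [g'g'⁻¹] = [e], and any k ∈ G with [k] ≤ [g] and [kk⁻¹] = [e] satisfies k ≃_A g'. -/
import Mathlib


/-!  A one-sorted algebraic formalization of ordered groupoids (Ehresmann / Lawson style).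
Arrows form the carrier; composition `g * h` is "defined" when `g⁻¹ * g = h * h⁻¹`,
and is junk otherwise.  `res f g` is the restriction `(f|g)` of axiom (OG3). -/

universe u v w u'

class OGroupoid (G : Type u) extends PartialOrder G, Mul G, Inv G where
  gpd_assoc : ∀ g h k : G, g⁻¹ * g = h * h⁻¹ → h⁻¹ * h = k * k⁻¹ →
      (g * h) * k = g * (h * k)
  gpd_inv_inv : ∀ g : G, g⁻¹⁻¹ = g
  gpd_mul_inv_rev : ∀ g h : G, g⁻¹ * g = h * h⁻¹ → (g * h)⁻¹ = h⁻¹ * g⁻¹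
  gpd_dom_mul : ∀ g h : G, g⁻¹ * g = h * h⁻¹ → (g * h) * (g * h)⁻¹ = g * g⁻¹
  gpd_ran_mul : ∀ g h : G, g⁻¹ * g = h * h⁻¹ → (g * h)⁻¹ * (g * h) = h⁻¹ * h
  gpd_id_left : ∀ g : G, g * g⁻¹ * g = g
  gpd_id_right : ∀ g : G, g * (g⁻¹ * g) = g
  ord_inv : ∀ g h : G, g ≤ h → g⁻¹ ≤ h⁻¹
  ord_mul : ∀ g₁ g₂ h₁ h₂ : G, g₁ ≤ g₂ → h₁ ≤ h₂ →
      g₁⁻¹ * g₁ = h₁ * h₁⁻¹ → g₂⁻¹ * g₂ = h₂ * h₂⁻¹ → g₁ * h₁ ≤ g₂ * h₂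
  res : G → G → G
  res_dom : ∀ f g : G, f * f⁻¹ = f → f ≤ g * g⁻¹ → res f g * (res f g)⁻¹ = f
  res_le : ∀ f g : G, f * f⁻¹ = f → f ≤ g * g⁻¹ → res f g ≤ g
  res_unique : ∀ f g k : G, f * f⁻¹ = f → f ≤ g * g⁻¹ → k * k⁻¹ = f → k ≤ g →
      k = res f g

namespace OGroupoid

variable {G : Type u} [OGroupoid G]

/-- The domain identity `g𝐝 = g * g⁻¹`. -/
def dm (g : G) : G := g * g⁻¹

/-- The range identity `g𝐫 = g⁻¹ * g`. -/
def rn (g : G) : G := g⁻¹ * g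

/-- The composition `g * h` is defined. -/
def Cmp (g h : G) : Prop := g⁻¹ * g = h * h⁻¹

/-- `e` is an identity of the groupoid. -/
def IsId (e : G) : Prop := e * e⁻¹ = e

/-- The corestriction `(g|f) = (f|g⁻¹)⁻¹` for an identity `f ≤ g𝐫`. -/
def cor (g f : G) : G := (res f g⁻¹)⁻¹

end OGroupoid

open OGroupoid

/-- An ordered functor between ordered groupoids. -/
structure OFunctor (G : Type u) (H : Type v) [OGroupoid G] [OGroupoid H] where
  toFun : G → H
  map_mul : ∀ g h : G, Cmp g h → toFun (g * h) = toFun g * toFun h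
  map_inv : ∀ g : G, toFun g⁻¹ = (toFun g)⁻¹
  map_le : ∀ g h : G, g ≤ h → toFun g ≤ toFun h

namespace OFunctor

variable {G : Type u} {H : Type v} [OGroupoid G] [OGroupoid H]

/-- Star-surjectivity: `φ` is a fibration of ordered groupoids. -/
def StarSurjective (φ : OFunctor G H) : Prop :=
  ∀ e : G, IsId e → ∀ h : H, dm h = φ.toFun e → ∃ g : G, dm g = e ∧ φ.toFun g = h

/-- Star-injectivity: `φ` is an immersion of ordered groupoids. -/
def StarInjective (φ : OFunctor G H) : Prop :=
  ∀ g k : G, dm g = dm k → φ.toFun g = φ.toFun k → g = k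

/-- A covering is a star-bijective ordered functor. -/
def IsCovering (φ : OFunctor G H) : Prop := StarSurjective φ ∧ StarInjective φ

/-- The kernel of an ordered functor. -/
def ker (φ : OFunctor G H) : Set G := {g : G | IsId (φ.toFun g)}

end OFunctor

namespace OGroupoid

variable {G : Type u} [OGroupoid G]

/-- `A` is a subgroupoid: closed under inversion and (defined) composition. -/
def IsSubgroupoid (A : Set G) : Prop :=
  (∀ a ∈ A, a⁻¹ ∈ A) ∧ ∀ a ∈ A, ∀ b ∈ A, Cmp a b → a * b ∈ A

/-- `A` is a normal ordered subgroupoid of `G`: a wide subgroupoid, closed under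
restriction, and closed under conjugation `h⁻¹ a k` whenever `h` and `k` have a
common upper bound in `G`. -/
def IsNormalOSub (A : Set G) : Prop :=
  IsSubgroupoid A ∧
  (∀ e : G, IsId e → e ∈ A) ∧
  (∀ a ∈ A, ∀ e : G, IsId e → e ≤ dm a → res e a ∈ A) ∧
  (∀ a ∈ A, ∀ h k : G, (∃ g : G, h ≤ g ∧ k ≤ g) → dm h = dm a → rn a = dm k →
      h⁻¹ * a * k ∈ A)

/-- The relation `g ≃_A h`: there are `a, b, c, d ∈ A` with `a g b` and `c h d`
defined, `a g b ≤ h` and `c h d ≤ g`. -/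
def simA (A : Set G) (g h : G) : Prop :=
  (∃ a ∈ A, ∃ b ∈ A, Cmp a g ∧ Cmp g b ∧ a * g * b ≤ h) ∧
  (∃ c ∈ A, ∃ d ∈ A, Cmp c h ∧ Cmp h d ∧ c * h * d ≤ g)

/-- The relation inducing the order on `≃_A`-classes: `[g] ≤ [k]` iff there are
`a, b ∈ A` with `a g b` defined and `a g b ≤ k`. -/
def leA (A : Set G) (g k : G) : Prop :=
  ∃ a ∈ A, ∃ b ∈ A, Cmp a g ∧ Cmp g b ∧ a * g * b ≤ k

/-- An `A`-nexus between identities `e` and `f`: a pair `(a,p)` of arrows of `A`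
with `a𝐝 ≤ e`, `a𝐫 = f`, `p𝐝 ≤ f`, `p𝐫 = e`. -/
def IsNexus (A : Set G) (a p e f : G) : Prop :=
  a ∈ A ∧ p ∈ A ∧ dm a ≤ e ∧ rn a = f ∧ dm p ≤ f ∧ rn p = e

end OGroupoid

namespace OGroupoid

variable {G : Type u} [OGroupoid G]

lemma cmpSI (g : G) : Cmp g g⁻¹ := by unfold Cmp; rw [gpd_inv_inv]

lemma cmpIS (g : G) : Cmp g⁻¹ g := by unfold Cmp; rw [gpd_inv_inv]

lemma isId_dm (g : G) : IsId (dm g) := gpd_dom_mul g g⁻¹ (cmpSI g)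

lemma dm_inv (g : G) : dm g⁻¹ = rn g := by unfold dm rn; rw [gpd_inv_inv]

lemma rn_inv (g : G) : rn g⁻¹ = dm g := by unfold dm rn; rw [gpd_inv_inv]

lemma isId_rn (g : G) : IsId (rn g) := by rw [← dm_inv]; exact isId_dm g⁻¹

lemma id_inv {e : G} (he : IsId e) : e⁻¹ = e := by
  have h := gpd_mul_inv_rev e e⁻¹ (cmpSI e)
  rw [gpd_inv_inv] at h
  rw [he] at h
  exact h

lemma id_dm {e : G} (he : IsId e) : dm e = e := he

lemma id_rn {e : G} (he : IsId e) : rn e = e := by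
  unfold rn; rw [id_inv he]; nth_rewrite 2 [← id_inv he]
  exact he

lemma dm_mul {g k : G} (h : Cmp g k) : dm (g * k) = dm g := gpd_dom_mul g k h

lemma rn_mul {g k : G} (h : Cmp g k) : rn (g * k) = rn k := gpd_ran_mul g k h

lemma dm_le {g h : G} (hgh : g ≤ h) : dm g ≤ dm h :=
  ord_mul g h g⁻¹ h⁻¹ hgh (ord_inv g h hgh) (cmpSI g) (cmpSI h)

lemma rn_le {g h : G} (hgh : g ≤ h) : rn g ≤ rn h :=
  ord_mul g⁻¹ h⁻¹ g h (ord_inv g h hgh) hgh (cmpIS g) (cmpIS h)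

lemma dm_mul_self (g : G) : dm g * g = g := gpd_id_left g

lemma mul_rn_self (g : G) : g * rn g = g := gpd_id_right g

lemma assoc3 {g h k : G} (h1 : Cmp g h) (h2 : Cmp h k) : g * h * k = g * (h * k) :=
  gpd_assoc g h k h1 h2

lemma mul_inv_cancel_left' {g k : G} (h : Cmp g k) : g⁻¹ * (g * k) = k := by
  rw [← assoc3 (cmpIS g) h]
  show g⁻¹ * g * k = k
  rw [show g⁻¹ * g = k * k⁻¹ from h]; exact dm_mul_self k

lemma inv_mul_cancel_left' {g k : G} (h : dm g = dm k) : g * (g⁻¹ * k) = k := by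
  have hc : Cmp g⁻¹ k := by unfold Cmp; rw [gpd_inv_inv]; exact h
  rw [← assoc3 (cmpSI g) hc]
  show dm g * k = k
  rw [h]; exact dm_mul_self k

lemma mul_inv_cancel_right' {g k : G} (h : Cmp g k) : (g * k) * k⁻¹ = g := by
  rw [assoc3 h (cmpSI k)]
  show g * (k * k⁻¹) = g
  rw [show k * k⁻¹ = g⁻¹ * g from h.symm]; exact mul_rn_self g

/-- If `k ≤ g` and `f ≤ dm k` is an identity, then `res f g = res f k`. -/
lemma res_congr {f k g : G} (hf : IsId f) (hkg : k ≤ g) (hfk : f ≤ dm k) :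
    res f g = res f k :=
  (res_unique f g (res f k) hf (le_trans hfk (dm_le hkg)) (res_dom f k hf hfk)
    (le_trans (res_le f k hf hfk) hkg)).symm

/-- Any arrow `a ∈ A` witnesses `dm a ≃_A rn a`. -/
lemma simA_dm_rn {A : Set G} (hA : IsNormalOSub A) {a : G} (ha : a ∈ A) :
    simA A (dm a) (rn a) := by
  have hai : a⁻¹ ∈ A := hA.1.1 a ha
  have h1 : Cmp a⁻¹ (dm a) := by
    unfold Cmp; rw [gpd_inv_inv]; exact (isId_dm a).symm
  have h2 : Cmp (dm a) a := by
    show rn (dm a) = dm a; exact id_rn (isId_dm a)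
  have h3 : Cmp a (rn a) := by
    show rn a = dm (rn a); exact (id_dm (isId_rn a)).symm
  have h4 : Cmp (rn a) a⁻¹ := by
    show rn (rn a) = dm a⁻¹; rw [id_rn (isId_rn a), dm_inv]
  have key1 : a⁻¹ * dm a * a = rn a := by
    have : a⁻¹ * dm a = a⁻¹ := by
      show a⁻¹ * (a * a⁻¹) = a⁻¹
      have := mul_rn_self a⁻¹
      rw [rn_inv] at this; exact this
    rw [this]; rfl
  have key2 : a * rn a * a⁻¹ = dm a := by
    rw [mul_rn_self a]; rfl
  constructor
  · exact ⟨a⁻¹, hai, a, ha, h1, h2, le_of_eq key1⟩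
  · exact ⟨a, ha, a⁻¹, hai, h3, h4, le_of_eq key2⟩

end OGroupoid

/-- **Statement 13.** If `e` is an identity with `[e] ≤ [gg⁻¹]` in `G ⫽ A`, then
there is a class `[k]` with `[k] ≤ [g]` and `[kk⁻¹] = [e]`, and it is unique:
concretely, for any `a ∈ A` with `aa⁻¹ ≤ gg⁻¹` and `a⁻¹a = e`, the restriction
`g' = (aa⁻¹|g)` satisfies `[g'] ≤ [g]` and `[g'g'⁻¹] = [e]`, and every `k` with
`[k] ≤ [g]` and `[kk⁻¹] = [e]` satisfies `k ≃_A g'`. -/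
theorem quotient_restriction_exists_unique {G : Type u} [OGroupoid G] (A : Set G)
    (hA : IsNormalOSub A) (g e : G) (he : IsId e) (hle : leA A e (dm g)) :
    (∃ k : G, leA A k g ∧ simA A (dm k) e) ∧
    ∀ a ∈ A, dm a ≤ dm g → rn a = e →
      leA A (res (dm a) g) g ∧ simA A (dm (res (dm a) g)) e ∧
      ∀ k : G, leA A k g → simA A (dm k) e → simA A k (res (dm a) g) := by
  have main : ∀ a ∈ A, dm a ≤ dm g → rn a = e →
      leA A (res (dm a) g) g ∧ simA A (dm (res (dm a) g)) e ∧
      ∀ k : G, leA A k g → simA A (dm k) e → simA A k (res (dm a) g) := by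
    intro a haA hadm harn
    set g' := res (dm a) g with hg'def
    have hg'le : g' ≤ g := res_le (dm a) g (isId_dm a) hadm
    have hg'dm : dm g' = dm a := res_dom (dm a) g (isId_dm a) hadm
    refine ⟨?_, ?_, ?_⟩
    · -- leA A g' g
      refine ⟨dm g', hA.2.1 _ (isId_dm g'), rn g', hA.2.1 _ (isId_rn g'),
        show rn (dm g') = dm g' from id_rn (isId_dm g'),
        show rn g' = dm (rn g') from (id_dm (isId_rn g')).symm, ?_⟩
      rw [dm_mul_self g', mul_rn_self g']
      exact hg'le
    · -- simA A (dm g') e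
      have hs := simA_dm_rn hA haA
      rw [harn] at hs
      rw [hg'dm]
      exact hs
    · -- uniqueness
      intro k hk hsimk
      obtain ⟨c, hcA, d, hdA, hck, hkd, hckd⟩ := hk
      have hcmp_ck_d : Cmp (c * k) d := show rn (c * k) = dm d from by
        rw [rn_mul hck]; exact hkd
      have hdmk' : dm (c * k * d) = dm c := by
        rw [dm_mul hcmp_ck_d, dm_mul hck]
      have hrnk' : rn (c * k * d) = rn d := rn_mul hcmp_ck_d
      obtain ⟨⟨x, hxA, y, hyA, hxk, hky, hxy⟩, ⟨u, huA, v, hvA, hue, hev, huv⟩⟩ := hsimk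
      have hrnx : rn x = dm k := (show rn x = dm (dm k) from hxk).trans (id_dm (isId_dm k))
      have hcmp_xk_y : Cmp (x * dm k) y := show rn (x * dm k) = dm y from by
        rw [rn_mul hxk]; exact hky
      have hdmx : dm x ≤ e := by
        have h1 : dm (x * dm k * y) = dm x := by rw [dm_mul hcmp_xk_y, dm_mul hxk]
        have h2 := dm_le hxy
        rw [h1, id_dm he] at h2; exact h2
      have hrnu : rn u = e := (show rn u = dm e from hue).trans (id_dm he)
      have hcmp_ue_v : Cmp (u * e) v := show rn (u * e) = dm v from by
        rw [rn_mul hue]; exact hev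
      have hdmu : dm u ≤ dm k := by
        have h1 : dm (u * e * v) = dm u := by rw [dm_mul hcmp_ue_v, dm_mul hue]
        have h2 := dm_le huv
        rw [h1, id_dm (isId_dm k)] at h2; exact h2
      -- construct p = (a₃ * x) * c⁻¹ with rn p = dm c, dm p ≤ dm a
      have hxe : dm x ≤ dm a⁻¹ := by rw [dm_inv a, harn]; exact hdmx
      have ha3'A : res (dm x) a⁻¹ ∈ A :=
        hA.2.2.1 a⁻¹ (hA.1.1 a haA) (dm x) (isId_dm x) hxe
      set a3 := (res (dm x) a⁻¹)⁻¹ with ha3def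
      have ha3A : a3 ∈ A := hA.1.1 _ ha3'A
      have hrna3 : rn a3 = dm x := by
        rw [ha3def, rn_inv]; exact res_dom (dm x) a⁻¹ (isId_dm x) hxe
      have hdma3 : dm a3 ≤ dm a := by
        rw [ha3def, dm_inv]
        calc rn (res (dm x) a⁻¹) ≤ rn a⁻¹ := rn_le (res_le (dm x) a⁻¹ (isId_dm x) hxe)
          _ = dm a := rn_inv a
      have hcmp_a3x : Cmp a3 x := hrna3
      have hcmp_a3x_c : Cmp (a3 * x) c⁻¹ := show rn (a3 * x) = dm c⁻¹ from by
        rw [rn_mul hcmp_a3x, dm_inv c, hrnx]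
        exact (show rn c = dm k from hck).symm
      set p := (a3 * x) * c⁻¹ with hpdef
      have hpA : p ∈ A :=
        hA.1.2 _ (hA.1.2 a3 ha3A x hxA hcmp_a3x) c⁻¹ (hA.1.1 c hcA) hcmp_a3x_c
      have hrnp : rn p = dm c := by rw [hpdef, rn_mul hcmp_a3x_c, rn_inv]
      have hdmp : dm p ≤ dm a := by
        rw [hpdef, dm_mul hcmp_a3x_c, dm_mul hcmp_a3x]; exact hdma3
      -- construct r = (c₃ * u) * a⁻¹ with rn r = dm a, dm r ≤ dm c
      have hduc : dm u ≤ dm c⁻¹ := by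
        rw [dm_inv c, show rn c = dm k from hck]; exact hdmu
      have hc3'A : res (dm u) c⁻¹ ∈ A :=
        hA.2.2.1 c⁻¹ (hA.1.1 c hcA) (dm u) (isId_dm u) hduc
      set c3 := (res (dm u) c⁻¹)⁻¹ with hc3def
      have hc3A : c3 ∈ A := hA.1.1 _ hc3'A
      have hrnc3 : rn c3 = dm u := by
        rw [hc3def, rn_inv]; exact res_dom (dm u) c⁻¹ (isId_dm u) hduc
      have hdmc3 : dm c3 ≤ dm c := by
        rw [hc3def, dm_inv]
        calc rn (res (dm u) c⁻¹) ≤ rn c⁻¹ := rn_le (res_le (dm u) c⁻¹ (isId_dm u) hduc)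
          _ = dm c := rn_inv c
      have hcmp_c3u : Cmp c3 u := hrnc3
      have hcmp_c3u_a : Cmp (c3 * u) a⁻¹ := show rn (c3 * u) = dm a⁻¹ from by
        rw [rn_mul hcmp_c3u, hrnu, dm_inv a, harn]
      set r := (c3 * u) * a⁻¹ with hrdef
      have hrA : r ∈ A :=
        hA.1.2 _ (hA.1.2 c3 hc3A u huA hcmp_c3u) a⁻¹ (hA.1.1 a haA) hcmp_c3u_a
      have hrnr : rn r = dm a := by rw [hrdef, rn_mul hcmp_c3u_a, rn_inv]
      have hdmrc : dm r ≤ dm c := by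
        rw [hrdef, dm_mul hcmp_c3u_a, dm_mul hcmp_c3u]; exact hdmc3
      have hdmrk' : dm r ≤ dm (c * k * d) := by rw [hdmk']; exact hdmrc
      -- m = res (dm p) g  and  n = res (dm r) g
      have hdmp_g : dm p ≤ dm g := le_trans hdmp hadm
      set m := res (dm p) g with hmdef
      have hmg : m ≤ g := res_le (dm p) g (isId_dm p) hdmp_g
      have hdmm : dm m = dm p := res_dom (dm p) g (isId_dm p) hdmp_g
      have hpg' : dm p ≤ dm g' := by rw [hg'dm]; exact hdmp
      have hmg' : m ≤ g' := by
        rw [hmdef, hg'def, res_congr (isId_dm p) hg'le hpg']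
        exact res_le (dm p) g' (isId_dm p) hpg'
      have hdmr_g : dm r ≤ dm g := le_trans hdmrk' (dm_le hckd)
      set n := res (dm r) g with hndef
      have hng : n ≤ g := res_le (dm r) g (isId_dm r) hdmr_g
      have hdmn : dm n = dm r := res_dom (dm r) g (isId_dm r) hdmr_g
      have hnk' : n ≤ c * k * d := by
        rw [hndef, res_congr (isId_dm r) hckd hdmrk']
        exact res_le (dm r) (c * k * d) (isId_dm r) hdmrk'
      -- β₀ = (c*k*d)⁻¹ * p⁻¹ * m ∈ A by normality
      have hcmp_pi_m : Cmp p⁻¹ m := show rn p⁻¹ = dm m from by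
        rw [rn_inv]; exact hdmm.symm
      have hβ0A : (c * k * d)⁻¹ * p⁻¹ * m ∈ A := by
        refine hA.2.2.2 p⁻¹ (hA.1.1 p hpA) (c * k * d) m ⟨g, hckd, hmg⟩ ?_ ?_
        · rw [hdmk', dm_inv]; exact hrnp.symm
        · rw [rn_inv]; exact hdmm.symm
      set β0 := (c * k * d)⁻¹ * p⁻¹ * m with hβ0def
      have hcmp_ki_pi : Cmp (c * k * d)⁻¹ p⁻¹ := show rn (c * k * d)⁻¹ = dm p⁻¹ from by
        rw [rn_inv, dm_inv, hdmk']; exact hrnp.symm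
      have hcmp_kipi_m : Cmp ((c * k * d)⁻¹ * p⁻¹) m :=
        show rn ((c * k * d)⁻¹ * p⁻¹) = dm m from by
          rw [rn_mul hcmp_ki_pi, rn_inv]; exact hdmm.symm
      have hdmβ0 : dm β0 = rn (c * k * d) := by
        rw [hβ0def, dm_mul hcmp_kipi_m, dm_mul hcmp_ki_pi, dm_inv]
      have hcmp_dβ0 : Cmp d β0 := show rn d = dm β0 from by
        rw [hdmβ0, hrnk']
      -- γ = g'⁻¹ * r⁻¹ * n ∈ A by normality
      have hγA : g'⁻¹ * r⁻¹ * n ∈ A := by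
        refine hA.2.2.2 r⁻¹ (hA.1.1 r hrA) g' n ⟨g, hg'le, hng⟩ ?_ ?_
        · rw [hg'dm, dm_inv]; exact hrnr.symm
        · rw [rn_inv]; exact hdmn.symm
      set γ := g'⁻¹ * r⁻¹ * n with hγdef
      have hcmp_gi_ri : Cmp g'⁻¹ r⁻¹ := show rn g'⁻¹ = dm r⁻¹ from by
        rw [rn_inv, dm_inv, hg'dm]; exact hrnr.symm
      have hcmp_ri_n : Cmp r⁻¹ n := show rn r⁻¹ = dm n from by
        rw [rn_inv]; exact hdmn.symm
      have hcmp_giri_n : Cmp (g'⁻¹ * r⁻¹) n := show rn (g'⁻¹ * r⁻¹) = dm n from by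
        rw [rn_mul hcmp_gi_ri, rn_inv]; exact hdmn.symm
      have hdmγ : dm γ = rn g' := by
        rw [hγdef, dm_mul hcmp_giri_n, dm_mul hcmp_gi_ri, dm_inv]
      have hrnγ : rn γ = rn n := by rw [hγdef, rn_mul hcmp_giri_n]
      -- c₂ and d₂
      have hdrc : dm r ≤ dm c := hdmrc
      have hc2'A : res (dm r) c ∈ A := hA.2.2.1 c hcA (dm r) (isId_dm r) hdrc
      set c2 := (res (dm r) c)⁻¹ with hc2def
      have hc2A : c2 ∈ A := hA.1.1 _ hc2'A
      have hrnc2 : rn c2 = dm r := by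
        rw [hc2def, rn_inv]; exact res_dom (dm r) c (isId_dm r) hdrc
      have hc2le : c2 ≤ c⁻¹ := ord_inv _ _ (res_le (dm r) c (isId_dm r) hdrc)
      have hrnnle : rn n ≤ dm d⁻¹ := by
        rw [dm_inv]
        calc rn n ≤ rn (c * k * d) := rn_le hnk'
          _ = rn d := hrnk'
      set d2 := res (rn n) d⁻¹ with hd2def
      have hd2A : d2 ∈ A := hA.2.2.1 d⁻¹ (hA.1.1 d hdA) (rn n) (isId_rn n) hrnnle
      have hdmd2 : dm d2 = rn n := res_dom (rn n) d⁻¹ (isId_rn n) hrnnle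
      have hd2le : d2 ≤ d⁻¹ := res_le (rn n) d⁻¹ (isId_rn n) hrnnle
      -- assemble the two directions of simA A k g'
      constructor
      · -- (p*c) * k * (d*β0) ≤ g'
        have hcmp_pc : Cmp p c := hrnp
        have hαA : p * c ∈ A := hA.1.2 p hpA c hcA hcmp_pc
        have hβA : d * β0 ∈ A := hA.1.2 d hdA β0 hβ0A hcmp_dβ0
        have hcmp_αk : Cmp (p * c) k := show rn (p * c) = dm k from by
          rw [rn_mul hcmp_pc]; exact hck
        have hcmp_kβ : Cmp k (d * β0) := show rn k = dm (d * β0) from by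
          rw [dm_mul hcmp_dβ0]; exact hkd
        refine ⟨p * c, hαA, d * β0, hβA, hcmp_αk, hcmp_kβ, ?_⟩
        have hcmp_p_ck : Cmp p (c * k) := show rn p = dm (c * k) from by
          rw [dm_mul hck]; exact hrnp
        have hcmp_ck_dβ : Cmp (c * k) (d * β0) := show rn (c * k) = dm (d * β0) from by
          rw [rn_mul hck, dm_mul hcmp_dβ0]; exact hkd
        have e4 : (c * k * d) * β0 = p⁻¹ * m := by
          rw [hβ0def, assoc3 hcmp_ki_pi hcmp_pi_m]
          exact inv_mul_cancel_left' (show dm (c * k * d) = dm (p⁻¹ * m) from by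
            rw [dm_mul hcmp_pi_m, dm_inv, hdmk']; exact hrnp.symm)
        have e5 : p * (p⁻¹ * m) = m := inv_mul_cancel_left' hdmm.symm
        have hval : (p * c) * k * (d * β0) = m := by
          calc (p * c) * k * (d * β0) = (p * (c * k)) * (d * β0) := by
                rw [assoc3 hcmp_pc hck]
            _ = p * ((c * k) * (d * β0)) := assoc3 hcmp_p_ck hcmp_ck_dβ
            _ = p * ((c * k * d) * β0) := by rw [← assoc3 hcmp_ck_d hcmp_dβ0]
            _ = p * (p⁻¹ * m) := by rw [e4]
            _ = m := e5
        rw [hval]; exact hmg'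
      · -- (c2*r) * g' * (γ*d2) ≤ k
        have hcmp_c2r : Cmp c2 r := hrnc2
        have hcmp_rg' : Cmp r g' := show rn r = dm g' from by rw [hrnr, hg'dm]
        have hcmp_γd2 : Cmp γ d2 := show rn γ = dm d2 from by rw [hrnγ, hdmd2]
        have hα'A : c2 * r ∈ A := hA.1.2 c2 hc2A r hrA hcmp_c2r
        have hβ'A : γ * d2 ∈ A := hA.1.2 γ hγA d2 hd2A hcmp_γd2
        have hcmp_α'g' : Cmp (c2 * r) g' := show rn (c2 * r) = dm g' from by
          rw [rn_mul hcmp_c2r, hg'dm]; exact hrnr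
        have hcmp_g'β' : Cmp g' (γ * d2) := show rn g' = dm (γ * d2) from by
          rw [dm_mul hcmp_γd2, hdmγ]
        refine ⟨c2 * r, hα'A, γ * d2, hβ'A, hcmp_α'g', hcmp_g'β', ?_⟩
        have hcmp_c2_rg' : Cmp c2 (r * g') := show rn c2 = dm (r * g') from by
          rw [dm_mul hcmp_rg']; exact hrnc2
        have hcmp_rg'_γd2 : Cmp (r * g') (γ * d2) :=
          show rn (r * g') = dm (γ * d2) from by
            rw [rn_mul hcmp_rg', dm_mul hcmp_γd2, hdmγ]
        have hcmp_rg'_γ : Cmp (r * g') γ := show rn (r * g') = dm γ from by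
          rw [rn_mul hcmp_rg', hdmγ]
        have s4 : (r * g') * γ = n := by
          have hinv : γ = (r * g')⁻¹ * n := by
            rw [hγdef, gpd_mul_inv_rev r g' hcmp_rg', assoc3 hcmp_gi_ri hcmp_ri_n,
              ← assoc3 hcmp_gi_ri hcmp_ri_n]
          rw [hinv]
          exact inv_mul_cancel_left' (show dm (r * g') = dm n from by
            rw [dm_mul hcmp_rg']; exact hdmn.symm)
        have hval : (c2 * r) * g' * (γ * d2) = c2 * (n * d2) := by
          calc (c2 * r) * g' * (γ * d2) = (c2 * (r * g')) * (γ * d2) := by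
                rw [assoc3 hcmp_c2r hcmp_rg']
            _ = c2 * ((r * g') * (γ * d2)) := assoc3 hcmp_c2_rg' hcmp_rg'_γd2
            _ = c2 * (((r * g') * γ) * d2) := by rw [← assoc3 hcmp_rg'_γ hcmp_γd2]
            _ = c2 * (n * d2) := by rw [s4]
        have hcmp_nd2 : Cmp n d2 := show rn n = dm d2 from hdmd2.symm
        have hcmp_k'd : Cmp (c * k * d) d⁻¹ := show rn (c * k * d) = dm d⁻¹ from by
          rw [hrnk', dm_inv]
        have hcmp_c2_nd2 : Cmp c2 (n * d2) := show rn c2 = dm (n * d2) from by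
          rw [dm_mul hcmp_nd2, hdmn]; exact hrnc2
        have hcmp_ci_k'd : Cmp c⁻¹ ((c * k * d) * d⁻¹) :=
          show rn c⁻¹ = dm ((c * k * d) * d⁻¹) from by
            rw [rn_inv, dm_mul hcmp_k'd, hdmk']
        have bnd1 : n * d2 ≤ (c * k * d) * d⁻¹ :=
          ord_mul n (c * k * d) d2 d⁻¹ hnk' hd2le hcmp_nd2 hcmp_k'd
        have bnd2 : c2 * (n * d2) ≤ c⁻¹ * ((c * k * d) * d⁻¹) :=
          ord_mul c2 c⁻¹ (n * d2) ((c * k * d) * d⁻¹) hc2le bnd1 hcmp_c2_nd2 hcmp_ci_k'd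
        have h6 : (c * k * d) * d⁻¹ = c * k := mul_inv_cancel_right' hcmp_ck_d
        have h7 : c⁻¹ * (c * k) = k := mul_inv_cancel_left' hck
        rw [hval]
        calc c2 * (n * d2) ≤ c⁻¹ * ((c * k * d) * d⁻¹) := bnd2
          _ = k := by rw [h6, h7]
  refine ⟨?_, main⟩
  obtain ⟨a0, ha0A, b0, hb0A, hc1, hc2, hle0⟩ := hle
  have harn0 : rn a0 = e := (show rn a0 = dm e from hc1).trans (id_dm he)
  have hcmp0 : Cmp (a0 * e) b0 := show rn (a0 * e) = dm b0 from by
    rw [rn_mul hc1]; exact hc2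
  have hadm0 : dm a0 ≤ dm g := by
    have h1 : dm (a0 * e * b0) = dm a0 := by rw [dm_mul hcmp0, dm_mul hc1]
    have h2 := dm_le hle0
    rw [h1, id_dm (isId_dm g)] at h2; exact h2
  obtain ⟨h1, h2, _⟩ := main a0 ha0A hadm0 harn0
  exact ⟨res (dm a0) g, h1, h2⟩
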